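/- For real x with x ≥ 1/√(n+1) and n ≥ 1, one has 1/(x·((n+1)/n + √((n+1)/n)·x)) - 1/x + 1 > 0. -/

import Mathlib

open Real

/-!
Put `s = √((n+1)/n) > 1`, so `(n+1)/n = s²` and the hypothesis on `x` reads `(s x)² ≥ s² - 1 = 1/n`.
Clearing the positive denominator `x (s² + s x)` turns the claim into positivity of the quadratic
`s x² + s (s-1) x + 1 - s²`. With `t = s x`, `s` times this quadratic is at least
`(s - 1) (s t - (s² - 1))`, and `s t > s² - 1` because `(s t)² ≥ s² (s² - 1) > (s² - 1)²`.
-/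

theorem quadratic_pos_of_sub_one_le_sq_mul {s x : ℝ} (hs : 1 < s) (hx : 0 < x)
    (h : s ^ 2 - 1 ≤ (s * x) ^ 2) : 0 < s * x ^ 2 + s * (s - 1) * x + 1 - s ^ 2 := by
  have hst : s ^ 2 - 1 < s * (s * x) := by
    refine lt_of_pow_lt_pow_left₀ 2 (by positivity) ?_
    nlinarith
  nlinarith [mul_lt_mul_of_pos_left hst (sub_pos.2 hs)]

theorem one_div_sub_one_div_add_one_pos {s x : ℝ} (hs : 1 < s) (hx : 0 < x)
    (h : s ^ 2 - 1 ≤ (s * x) ^ 2) : 0 < 1 / (x * (s ^ 2 + s * x)) - 1 / x + 1 := by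
  have hden : 0 < x * (s ^ 2 + s * x) := by positivity
  have hq := quadratic_pos_of_sub_one_le_sq_mul hs hx h
  have : 1 / (x * (s ^ 2 + s * x)) - 1 / x + 1
      = (s * x ^ 2 + s * (s - 1) * x + 1 - s ^ 2) / (x * (s ^ 2 + s * x)) := by
    field_simp
    ring
  rw [this]
  positivity

theorem stmt16 (n : ℕ) (hn : 1 ≤ n) (x : ℝ) (hx : x ≥ 1 / Real.sqrt (n + 1)) :
    1 / (x * ((n + 1) / n + Real.sqrt ((n + 1) / n) * x)) - 1 / x + 1 > 0 := by
  have hn0 : (0 : ℝ) < n := by exact_mod_cast hn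
  have hs2 : √((n + 1) / n) ^ 2 = (n + 1) / n := sq_sqrt (by positivity)
  have hs : 1 < √((n + 1) / n) := by
    rw [lt_sqrt zero_le_one, one_pow, one_lt_div hn0]
    linarith
  have hx0 : 0 < x := lt_of_lt_of_le (by positivity) hx
  have hx2 : 1 / (n + 1) ≤ x ^ 2 := by
    calc 1 / ((n : ℝ) + 1) = (1 / √(n + 1)) ^ 2 := by rw [div_pow, sq_sqrt (by positivity), one_pow]
      _ ≤ x ^ 2 := pow_le_pow_left₀ (by positivity) hx 2
  have hsx : √((n + 1) / n) ^ 2 - 1 ≤ (√((n + 1) / n) * x) ^ 2 := by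
    rw [mul_pow, hs2]
    calc ((n : ℝ) + 1) / n - 1 = (n + 1) / n * (1 / (n + 1)) := by field_simp; ring
      _ ≤ (n + 1) / n * x ^ 2 := by gcongr
  have := one_div_sub_one_div_add_one_pos hs hx0 hsx
  rwa [hs2] at this
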